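/- Let u be a v-minimal word of a synchronizing automaton 𝒜, let i ∈ supp(u) and g ∈ ℐ_i. If a word w u-represents g, then either g = θ_i(w) = 0_i, or supp(w) = supp(u). -/

import Mathlib

open scoped BigOperators

set_option synthInstance.maxHeartbeats 1000000
set_option maxHeartbeats 1000000

noncomputable section

/-- Action of a word on a state: `q · u`. -/
def actW {Q A : Type*} (δ : Q → A → Q) (q : Q) (u : List A) : Q :=
  u.foldl δ q

/-- The image `Q · u` of the full state set under a word. -/
def imageSet {Q A : Type*} [Fintype Q] [DecidableEq Q] (δ : Q → A → Q) (u : List A) :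
    Finset Q :=
  Finset.image (fun q => actW δ q u) Finset.univ

/-- The rank `rk(u) = |Q · u|` of a word. -/
def wordRank {Q A : Type*} [Fintype Q] [DecidableEq Q] (δ : Q → A → Q) (u : List A) : ℕ :=
  (imageSet δ u).card

/-- A word is reset (synchronizing) if `|Q · u| = 1`. -/
def IsReset {Q A : Type*} [Fintype Q] [DecidableEq Q] (δ : Q → A → Q) (u : List A) : Prop :=
  wordRank δ u = 1

/-- The automaton is synchronizing if it admits a reset word. -/
def IsSynchronizing {Q A : Type*} [Fintype Q] [DecidableEq Q] (δ : Q → A → Q) : Prop :=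
  ∃ u : List A, IsReset δ u

/-- `Syn(𝒜)`, the set of reset words. -/
def SynWords {Q A : Type*} [Fintype Q] [DecidableEq Q] (δ : Q → A → Q) : Set (List A) :=
  {u | IsReset δ u}

/-- The hyperplane `w⊥ = {v ∈ ℂQ : ∑ q, v q = 0}`. -/
def Wperp (Q : Type*) [Fintype Q] : Submodule ℂ (Q → ℂ) :=
  LinearMap.ker (∑ q : Q, (LinearMap.proj q : (Q → ℂ) →ₗ[ℂ] ℂ))

theorem mem_Wperp {Q : Type*} [Fintype Q] (v : Q → ℂ) :
    v ∈ Wperp Q ↔ ∑ q : Q, v q = 0 := by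
  simp [Wperp, LinearMap.mem_ker, LinearMap.sum_apply]

/-- The (right) action of a word on row vectors `v ↦ v·π(u)`. -/
def piLin {Q A : Type*} [Fintype Q] [DecidableEq Q] (δ : Q → A → Q) (u : List A) :
    (Q → ℂ) →ₗ[ℂ] (Q → ℂ) where
  toFun v := fun p => ∑ q ∈ Finset.univ.filter (fun q => actW δ q u = p), v q
  map_add' := by
    intro a b; funext p; simp [Finset.sum_add_distrib]
  map_smul' := by
    intro c v; funext p; simp [Finset.mul_sum]

theorem piLin_mem {Q A : Type*} [Fintype Q] [DecidableEq Q] (δ : Q → A → Q) (u : List A) :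
    ∀ v ∈ Wperp Q, piLin δ u v ∈ Wperp Q := by
  intro v hv
  rw [mem_Wperp] at hv ⊢
  have h := Finset.sum_fiberwise (Finset.univ : Finset Q) (fun q => actW δ q u) v
  calc ∑ p : Q, piLin δ u v p
      = ∑ p : Q, ∑ q ∈ Finset.univ.filter (fun q => actW δ q u = p), v q := rfl
    _ = ∑ q : Q, v q := h
    _ = 0 := hv

/-- The endomorphism of `w⊥` induced by a word. -/
def rhoEnd {Q A : Type*} [Fintype Q] [DecidableEq Q] (δ : Q → A → Q) (u : List A) :
    Module.End ℂ (Wperp Q) :=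
  (piLin δ u).restrict (piLin_mem δ u)

/-- The representation `ρ : Σ* → End(w⊥)`; we record it in the multiplicative opposite so
that `ρ (u ++ v) = ρ u * ρ v` (the paper's right-action convention). -/
def rho {Q A : Type*} [Fintype Q] [DecidableEq Q] (δ : Q → A → Q) (u : List A) :
    (Module.End ℂ (Wperp Q))ᵐᵒᵖ :=
  MulOpposite.op (rhoEnd δ u)

/-- `ℛ`, the ℂ-subalgebra generated by `ρ(Σ*)`. -/
def Ralg {Q A : Type*} [Fintype Q] [DecidableEq Q] (δ : Q → A → Q) :
    Subalgebra ℂ (Module.End ℂ (Wperp Q))ᵐᵒᵖ :=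
  Algebra.adjoin ℂ (Set.range (rho δ))

/-- `ρ(u)` seen as an element of `ℛ`. -/
def rhoR {Q A : Type*} [Fintype Q] [DecidableEq Q] (δ : Q → A → Q) (u : List A) :
    Ralg δ :=
  ⟨rho δ u, Algebra.subset_adjoin (Set.mem_range_self u)⟩

/-- The Jacobson radical `Rad(ℛ)` of `ℛ`, realised as a subset of the ambient algebra via
the standard characterisation: `x ∈ Rad(ℛ)` iff `x ∈ ℛ` and for every `y ∈ ℛ` the element
`1 - y * x` is left-invertible in `ℛ`. -/
def RadSet {Q A : Type*} [Fintype Q] [DecidableEq Q] (δ : Q → A → Q) :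
    Set (Module.End ℂ (Wperp Q))ᵐᵒᵖ :=
  {x | x ∈ Ralg δ ∧ ∀ y ∈ Ralg δ, ∃ z ∈ Ralg δ, z * (1 - y * x) = 1}

/-- `Rad(𝒜)`: the set of radical words, i.e. words `u` with `ρ(u) ∈ Rad(ℛ)`. -/
def RadWords {Q A : Type*} [Fintype Q] [DecidableEq Q] (δ : Q → A → Q) : Set (List A) :=
  {u | rho δ u ∈ RadSet δ}

/-- The automaton is semisimple when `Rad(𝒜) = Syn(𝒜)`. -/
def IsSemisimple {Q A : Type*} [Fintype Q] [DecidableEq Q] (δ : Q → A → Q) : Prop :=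
  RadWords δ = SynWords δ

/-- The `t`-packing number `D(t,r,n)`: the maximum size of a family of `r`-subsets of an
`n`-set in which every `t`-subset is contained in at most one member. -/
def packingNumber (t r n : ℕ) : ℕ :=
  sSup {m | ∃ F : Finset (Finset (Fin n)), F.card = m ∧ (∀ S ∈ F, S.card = r) ∧
    ∀ T : Finset (Fin n), T.card = t → (F.filter fun S => T ⊆ S).card ≤ 1}

/-- The former-rank `Fr(𝒜)`: the least rank of a non-reset word. -/
def formerRank {Q A : Type*} [Fintype Q] [DecidableEq Q] (δ : Q → A → Q) : ℕ :=
  sInf {m | ∃ u : List A, ¬ IsReset δ u ∧ wordRank δ u = m}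

/-- `Fs(𝒜)`: the set of former-synchronizing words. -/
def Fs {Q A : Type*} [Fintype Q] [DecidableEq Q] (δ : Q → A → Q) : Set (List A) :=
  {u | wordRank δ u = formerRank δ}

/-- `θ_i(u)`: the image of `ρ(u)` in the `i`-th Wedderburn–Artin matrix component, where
`e : ℛ → ∏ i, M_{n_i}(ℂ)` is the quotient map `ψ` followed by the fixed isomorphism. -/
def theta {Q A : Type*} [Fintype Q] [DecidableEq Q] (δ : Q → A → Q) {k : ℕ} {nn : Fin k → ℕ}
    (e : Ralg δ →ₐ[ℂ] ∀ i : Fin k, Matrix (Fin (nn i)) (Fin (nn i)) ℂ)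
    (u : List A) (i : Fin k) : Matrix (Fin (nn i)) (Fin (nn i)) ℂ :=
  e (rhoR δ u) i

/-- `supp(v) = {i : θ_i(v) ≠ 0}`. -/
def suppW {Q A : Type*} [Fintype Q] [DecidableEq Q] (δ : Q → A → Q) {k : ℕ} {nn : Fin k → ℕ}
    (e : Ralg δ →ₐ[ℂ] ∀ i : Fin k, Matrix (Fin (nn i)) (Fin (nn i)) ℂ)
    (v : List A) : Set (Fin k) :=
  {i | theta δ e v i ≠ 0}

/-- `u ∈ Σ* v Σ*`, i.e. `v` is a factor of `u`. -/
def InFactor {A : Type*} (v u : List A) : Prop :=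
  ∃ a b : List A, u = a ++ v ++ b

/-- `u` is a `v`-minimal word: `u ∈ Σ*vΣ*`, `supp(u)` is nonempty, and `supp(u)` is minimal
among the nonempty supports of words in `Σ*vΣ*`. -/
def IsVMinimal {Q A : Type*} [Fintype Q] [DecidableEq Q] (δ : Q → A → Q) {k : ℕ}
    {nn : Fin k → ℕ}
    (e : Ralg δ →ₐ[ℂ] ∀ i : Fin k, Matrix (Fin (nn i)) (Fin (nn i)) ℂ)
    (v u : List A) : Prop :=
  InFactor v u ∧ (suppW δ e u).Nonempty ∧
    ∀ z : List A, InFactor v z → suppW δ e z ⊆ suppW δ e u →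
      suppW δ e z = ∅ ∨ suppW δ e z = suppW δ e u

/-- The `i`-th factor monoid `ℳ_i = θ_i(Σ*)`. -/
def factorMonoid {Q A : Type*} [Fintype Q] [DecidableEq Q] (δ : Q → A → Q) {k : ℕ}
    {nn : Fin k → ℕ}
    (e : Ralg δ →ₐ[ℂ] ∀ i : Fin k, Matrix (Fin (nn i)) (Fin (nn i)) ℂ)
    (i : Fin k) : Set (Matrix (Fin (nn i)) (Fin (nn i)) ℂ) :=
  Set.range fun u : List A => theta δ e u i

/-- A two-sided ideal of the (sub)monoid `M`. -/
def IsSetIdeal {X : Type*} [Mul X] (M I : Set X) : Prop :=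
  I ⊆ M ∧ ∀ a ∈ M, ∀ x ∈ I, a * x ∈ I ∧ x * a ∈ I

/-- `I` is a `0`-minimal (two-sided) ideal of the monoid `M`. -/
def IsZeroMinimalIdeal {X : Type*} [Mul X] [Zero X] (M I : Set X) : Prop :=
  IsSetIdeal M I ∧ (0 : X) ∈ I ∧ I ≠ {0} ∧
    ∀ J : Set X, IsSetIdeal M J → (0 : X) ∈ J → J ⊆ I → J ≠ {0} → J = I

/-- `Rnk_i(g) = min {rk(u) : θ_i(u) = g}`. -/
def rnkElt {Q A : Type*} [Fintype Q] [DecidableEq Q] (δ : Q → A → Q) {k : ℕ}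
    {nn : Fin k → ℕ}
    (e : Ralg δ →ₐ[ℂ] ∀ i : Fin k, Matrix (Fin (nn i)) (Fin (nn i)) ℂ)
    (i : Fin k) (g : Matrix (Fin (nn i)) (Fin (nn i)) ℂ) : ℕ :=
  sInf {m | ∃ u : List A, theta δ e u i = g ∧ wordRank δ u = m}

/-- `Rnk(ℐ_i) = min {Rnk_i(g) : g ∈ ℐ_i ∖ {0}}`. -/
def rnkIdeal {Q A : Type*} [Fintype Q] [DecidableEq Q] (δ : Q → A → Q) {k : ℕ}
    {nn : Fin k → ℕ}
    (e : Ralg δ →ₐ[ℂ] ∀ i : Fin k, Matrix (Fin (nn i)) (Fin (nn i)) ℂ)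
    (i : Fin k) (I : Set (Matrix (Fin (nn i)) (Fin (nn i)) ℂ)) : ℕ :=
  sInf {m | ∃ g ∈ I, g ≠ 0 ∧ rnkElt δ e i g = m}

/-- `w` `u`-represents `g`: `w ∈ Σ*uΣ*`, `θ_i(w) = g`, and either `g = 0` or `rk(w)` is
minimum among all words with the first two properties. -/
def URepresents {Q A : Type*} [Fintype Q] [DecidableEq Q] (δ : Q → A → Q) {k : ℕ}
    {nn : Fin k → ℕ}
    (e : Ralg δ →ₐ[ℂ] ∀ i : Fin k, Matrix (Fin (nn i)) (Fin (nn i)) ℂ)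
    (u : List A) (i : Fin k) (w : List A) (g : Matrix (Fin (nn i)) (Fin (nn i)) ℂ) : Prop :=
  InFactor u w ∧ theta δ e w i = g ∧
    (g = 0 ∨ ∀ w' : List A, InFactor u w' → theta δ e w' i = g → wordRank δ w ≤ wordRank δ w')

/-- The relation `σ_i` on `ℐ_i`. -/
def sigmaRel {Q A : Type*} [Fintype Q] [DecidableEq Q] (δ : Q → A → Q) {k : ℕ}
    {nn : Fin k → ℕ}
    (e : Ralg δ →ₐ[ℂ] ∀ i : Fin k, Matrix (Fin (nn i)) (Fin (nn i)) ℂ)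
    (i : Fin k) (u : List A)
    (g f : Matrix (Fin (nn i)) (Fin (nn i)) ℂ) : Prop :=
  g = f ∨ ∃ w₁ w₂ : List A, URepresents δ e u i w₁ g ∧ URepresents δ e u i w₂ f ∧
    1 < (imageSet δ w₁ ∩ imageSet δ w₂).card

/-- `T ⊆ [1,k]` is a core. -/
def IsCore {Q A : Type*} [Fintype Q] [DecidableEq Q] (δ : Q → A → Q) {k : ℕ}
    {nn : Fin k → ℕ}
    (e : Ralg δ →ₐ[ℂ] ∀ i : Fin k, Matrix (Fin (nn i)) (Fin (nn i)) ℂ)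
    (T : Set (Fin k)) : Prop :=
  ∀ x : List A, (∀ i ∈ T, theta δ e x i = 0) → ∀ i : Fin k, theta δ e x i = 0

/-- A minimal core. -/
def IsMinimalCore {Q A : Type*} [Fintype Q] [DecidableEq Q] (δ : Q → A → Q) {k : ℕ}
    {nn : Fin k → ℕ}
    (e : Ralg δ →ₐ[ℂ] ∀ i : Fin k, Matrix (Fin (nn i)) (Fin (nn i)) ℂ)
    (T : Set (Fin k)) : Prop :=
  IsCore δ e T ∧ ∀ T' : Set (Fin k), T' ⊆ T → IsCore δ e T' → T' = T

/-- An automaton congruence. -/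
def IsCongruence {Q A : Type*} (δ : Q → A → Q) (σ : Q → Q → Prop) : Prop :=
  Equivalence σ ∧ ∀ q p : Q, σ q p → ∀ u : List A, σ (actW δ q u) (actW δ p u)

/-- A simple automaton: the only congruences are the identity and the universal relation. -/
def IsSimple {Q A : Type*} (δ : Q → A → Q) : Prop :=
  ∀ σ : Q → Q → Prop, IsCongruence δ σ → σ = Eq ∨ σ = fun _ _ => True


theorem actW_append {Q A : Type*} (δ : Q → A → Q) (q : Q) (x y : List A) :
    actW δ q (x ++ y) = actW δ (actW δ q x) y :=
  List.foldl_append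

theorem piLin_append {Q A : Type*} [Fintype Q] [DecidableEq Q] (δ : Q → A → Q)
    (x y : List A) : piLin δ (x ++ y) = piLin δ y ∘ₗ piLin δ x := by
  refine LinearMap.ext fun v => funext fun p => ?_
  simp only [piLin, LinearMap.coe_mk, AddHom.coe_mk, LinearMap.comp_apply, actW_append]
  rw [Finset.sum_fiberwise_eq_sum_filter]
  simp only [Finset.mem_filter, Finset.mem_univ, true_and]

theorem rho_append {Q A : Type*} [Fintype Q] [DecidableEq Q] (δ : Q → A → Q)
    (x y : List A) : rho δ (x ++ y) = rho δ x * rho δ y := by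
  refine MulOpposite.unop_injective (LinearMap.ext fun v => Subtype.ext ?_)
  exact LinearMap.congr_fun (piLin_append δ x y) v

theorem theta_append {Q A : Type*} [Fintype Q] [DecidableEq Q] (δ : Q → A → Q) {k : ℕ}
    {nn : Fin k → ℕ} (e : Ralg δ →ₐ[ℂ] ∀ i : Fin k, Matrix (Fin (nn i)) (Fin (nn i)) ℂ)
    (x y : List A) (i : Fin k) :
    theta δ e (x ++ y) i = theta δ e x i * theta δ e y i := by
  have : rhoR δ (x ++ y) = rhoR δ x * rhoR δ y := Subtype.ext (rho_append δ x y)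
  simp only [theta, this, map_mul, Pi.mul_apply]

theorem InFactor.trans {A : Type*} {u v w : List A} (huv : InFactor u v) (hvw : InFactor v w) :
    InFactor u w := by
  obtain ⟨a, b, rfl⟩ := huv
  obtain ⟨c, d, rfl⟩ := hvw
  exact ⟨c ++ a, b ++ d, by simp only [List.append_assoc]⟩

theorem suppW_subset_of_inFactor {Q A : Type*} [Fintype Q] [DecidableEq Q] (δ : Q → A → Q)
    {k : ℕ} {nn : Fin k → ℕ}
    (e : Ralg δ →ₐ[ℂ] ∀ i : Fin k, Matrix (Fin (nn i)) (Fin (nn i)) ℂ) {u w : List A}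
    (h : InFactor u w) : suppW δ e w ⊆ suppW δ e u := by
  obtain ⟨a, b, rfl⟩ := h
  intro j hj hu
  exact hj (by rw [theta_append, theta_append, hu, mul_zero, zero_mul])

theorem IsVMinimal.suppW_eq_of_inFactor {Q A : Type*} [Fintype Q] [DecidableEq Q]
    {δ : Q → A → Q} {k : ℕ} {nn : Fin k → ℕ}
    {e : Ralg δ →ₐ[ℂ] ∀ i : Fin k, Matrix (Fin (nn i)) (Fin (nn i)) ℂ} {v u w : List A}
    (hu : IsVMinimal δ e v u) (hw : InFactor u w) :
    suppW δ e w = ∅ ∨ suppW δ e w = suppW δ e u :=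
  hu.2.2 w (hu.1.trans hw) (suppW_subset_of_inFactor δ e hw)

theorem stmt11_general {Q A : Type*} [Fintype Q] [DecidableEq Q] (δ : Q → A → Q)
    {k : ℕ} {nn : Fin k → ℕ}
    (e : Ralg δ →ₐ[ℂ] ∀ i : Fin k, Matrix (Fin (nn i)) (Fin (nn i)) ℂ)
    (v u : List A) (hu : IsVMinimal δ e v u) (i : Fin k)
    (g : Matrix (Fin (nn i)) (Fin (nn i)) ℂ)
    (w : List A) (hw : URepresents δ e u i w g) :
    (g = 0 ∧ theta δ e w i = 0) ∨ suppW δ e w = suppW δ e u := by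
  obtain ⟨hfac, rfl, -⟩ := hw
  refine (hu.suppW_eq_of_inFactor hfac).imp (fun hempty => ?_) id
  have hwi : theta δ e w i = 0 := not_not.mp (Set.eq_empty_iff_forall_notMem.mp hempty i)
  exact ⟨hwi, hwi⟩

theorem stmt11 {Q A : Type*} [Fintype Q] [DecidableEq Q] (δ : Q → A → Q)
    {k : ℕ} {nn : Fin k → ℕ}
    (e : Ralg δ →ₐ[ℂ] ∀ i : Fin k, Matrix (Fin (nn i)) (Fin (nn i)) ℂ)
    (he_surj : Function.Surjective e)
    (he_ker : ∀ x : Ralg δ, e x = 0 ↔ (x : (Module.End ℂ (Wperp Q))ᵐᵒᵖ) ∈ RadSet δ)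
    (Ii : ∀ i : Fin k, Set (Matrix (Fin (nn i)) (Fin (nn i)) ℂ))
    (hIi : ∀ i : Fin k, IsZeroMinimalIdeal (factorMonoid δ e i) (Ii i))
    (hIuniq : ∀ (i : Fin k) (J : Set (Matrix (Fin (nn i)) (Fin (nn i)) ℂ)),
      IsZeroMinimalIdeal (factorMonoid δ e i) J → J = Ii i)
    (hsync : IsSynchronizing δ)
    (v u : List A) (hu : IsVMinimal δ e v u) (i : Fin k) (hi : i ∈ suppW δ e u)
    (g : Matrix (Fin (nn i)) (Fin (nn i)) ℂ) (hg : g ∈ Ii i)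
    (w : List A) (hw : URepresents δ e u i w g) :
    (g = 0 ∧ theta δ e w i = 0) ∨ suppW δ e w = suppW δ e u :=
  stmt11_general δ e v u hu i g w hw

end
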